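/- If two microCCS processes are strongly bisimilar, then they have the same size (number of prefixes). -/
import Mathlib


/-- CCS visible actions: a name `a` or a coname `ā`. -/
inductive Act where
  | inp : ℕ → Act
  | out : ℕ → Act
deriving DecidableEq

/-- The coaction. -/
def Act.co : Act → Act
  | .inp a => .out a
  | .out a => .inp a

/-- MicroCCS processes: nil, prefix, parallel composition. -/
inductive Proc where
  | nil : Proc
  | pre : Act → Proc → Proc
  | par : Proc → Proc → Proc
deriving DecidableEq

/-- Transition labels: a visible action or τ. -/
inductive Lab where
  | act : Act → Lab
  | tau : Lab
deriving DecidableEq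

/-- The standard CCS labelled transition system on microCCS. -/
inductive Step : Proc → Lab → Proc → Prop where
  | pre (η : Act) (P : Proc) : Step (.pre η P) (.act η) P
  | syn {P P' Q Q' : Proc} {η : Act} :
      Step P (.act η) P' → Step Q (.act η.co) Q' →
      Step (.par P Q) .tau (.par P' Q')
  | parL {P P' : Proc} {μ : Lab} (Q : Proc) :
      Step P μ P' → Step (.par P Q) μ (.par P' Q)
  | parR {Q Q' : Proc} {μ : Lab} (P : Proc) :
      Step Q μ Q' → Step (.par P Q) μ (.par P Q')

/-- A (symmetric) bisimulation. -/
def IsBisim (R : Proc → Proc → Prop) : Prop :=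
  (∀ P Q, R P Q → R Q P) ∧
  ∀ P Q μ P', R P Q → Step P μ P' → ∃ Q', Step Q μ Q' ∧ R P' Q'

/-- Strong bisimilarity: the union of all bisimulations. -/
def Bisim (P Q : Proc) : Prop := ∃ R, IsBisim R ∧ R P Q

/-- The size of a process: its number of prefixes. -/
def Proc.size : Proc → ℕ
  | .nil => 0
  | .pre _ P => 1 + P.size
  | .par P Q => P.size + Q.size

/-- Structural congruence: abelian monoid laws for parallel composition. -/
inductive SC : Proc → Proc → Prop where
  | refl (P) : SC P P
  | symm : SC P Q → SC Q P
  | trans : SC P Q → SC Q R → SC P R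
  | comm (P Q) : SC (.par P Q) (.par Q P)
  | assoc (P Q R) : SC (.par P (.par Q R)) (.par (.par P Q) R)
  | unit (P) : SC (.par P .nil) P
  | pre (η) : SC P Q → SC (.pre η P) (.pre η Q)
  | par : SC P P' → SC Q Q' → SC (.par P Q) (.par P' Q')

/-- `pow P k` is the k-fold parallel composition of `P`. -/
def pow (P : Proc) : ℕ → Proc
  | 0 => .nil
  | n+1 => .par P (pow P n)

/-- One step of rewriting with the distribution law
    `η.(P ‖ (η.P)^k) ⇝ (η.P)^{k+1}` (k ≥ 1), modulo structural
    congruence, in any context. -/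
inductive RW : Proc → Proc → Prop where
  | head {η : Act} {P : Proc} {k : ℕ} (hk : 1 ≤ k) :
      RW (.pre η (.par P (pow (.pre η P) k))) (pow (.pre η P) (k+1))
  | pre (η) : RW P P' → RW (.pre η P) (.pre η P')
  | parL (Q) : RW P P' → RW (.par P Q) (.par P' Q)
  | parR (P) : RW Q Q' → RW (.par P Q) (.par P Q')
  | congr : SC P P₁ → RW P₁ P₂ → SC P₂ P' → RW P P'

/-- Reflexive-transitive closure of the distribution rewriting. -/
def Rws : Proc → Proc → Prop := Relation.ReflTransGen RW

/-- Normal forms for the distribution rewriting. -/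
def NF (P : Proc) : Prop := ¬ ∃ P', RW P P'

/-- Prime processes. -/
def IsPrime (P : Proc) : Prop :=
  ¬ Bisim P .nil ∧ ∀ Q R, Bisim P (.par Q R) → Bisim Q .nil ∨ Bisim R .nil

lemma step_act_size {P P' : Proc} {μ : Lab} (h : Step P μ P') :
    ∀ η, μ = .act η → P'.size + 1 = P.size := by
  induction h with
  | pre η P => intro _ _; simp [Proc.size, Nat.add_comm]
  | syn _ _ _ _ => intro _ h; cases h
  | parL Q _ ih =>
      intro η hη
      simp only [Proc.size]
      have := ih η hη
      omega
  | parR P _ ih =>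
      intro η hη
      simp only [Proc.size]
      have := ih η hη
      omega

lemma exists_act_step {P : Proc} (h : 0 < P.size) :
    ∃ η P', Step P (.act η) P' := by
  induction P with
  | nil => simp [Proc.size] at h
  | pre η P _ => exact ⟨η, P, Step.pre η P⟩
  | par P Q ihP ihQ =>
      simp only [Proc.size] at h
      rcases Nat.eq_zero_or_pos P.size with hP | hP
      · obtain ⟨η, Q', hs⟩ := ihQ (by omega)
        exact ⟨η, .par P Q', Step.parR P hs⟩
      · obtain ⟨η, P', hs⟩ := ihP hP
        exact ⟨η, .par P' Q, Step.parL Q hs⟩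

lemma bisim_size_aux {R : Proc → Proc → Prop} (hR : IsBisim R) :
    ∀ n P Q, P.size = n → R P Q → Q.size = n := by
  intro n
  induction n with
  | zero =>
      intro P Q h0 hr
      by_contra hne
      obtain ⟨η, Q', hs⟩ := exists_act_step (Nat.pos_of_ne_zero hne)
      obtain ⟨P', hsP, _⟩ := hR.2 Q P _ Q' (hR.1 P Q hr) hs
      have := step_act_size hsP η rfl
      omega
  | succ n ih =>
      intro P Q hs hr
      obtain ⟨η, P', hsP⟩ := exists_act_step (by omega : 0 < P.size)
      obtain ⟨Q', hsQ, hr'⟩ := hR.2 P Q _ P' hr hsP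
      have h1 := step_act_size hsP η rfl
      have h2 := step_act_size hsQ η rfl
      have := ih P' Q' (by omega) hr'
      omega

/-- bisimilar microCCS processes have the same size. -/
theorem bisim_size {P Q : Proc} (h : Bisim P Q) : P.size = Q.size := by
  obtain ⟨R, hR, hr⟩ := h
  exact (bisim_size_aux hR P.size P Q rfl hr).symm
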